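/- arXiv:1703.00672 — 3 statements merged into one kernel-verified Lean document; each statement's English description precedes it below -/
import Mathlib

section
/- Let d ≥ 1 be an integer, σ > 0, and let f : ℝ → ℝ be Lipschitz and bistable with threshold θ. Let 0 < μ₁ ≤ μ₂, 0 < T₁ ≤ T₂, and let Ω₁ ⊆ Ω₂ be open subsets of ℝ^d. If u₁ is a classical solution of the controlled system with parameters (μ₁, T₁, Ω₁) and u₂ is a classical solution of the controlled system with parameters (μ₂, T₂, Ω₂), both with values in [0,1] and with the same initial datum u₁(0,·) = u₂(0,·), then u₁(t,x) ≤ u₂(t,x) for all t ≥ 0 and x ∈ ℝ^d. (Solutions of the controlled system are nondecreasing with respect to μ, T, and Ω.) -/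
open Set MeasureTheory Filter

/-- Laplacian in the space variable, as the sum of second partial derivatives. -/
noncomputable def lap (d : ℕ) (g : EuclideanSpace ℝ (Fin d) → ℝ)
    (x : EuclideanSpace ℝ (Fin d)) : ℝ :=
  ∑ i : Fin d, fderiv ℝ (fun y => fderiv ℝ g y (EuclideanSpace.single i 1)) x
    (EuclideanSpace.single i 1)

/-- `f` is bistable with threshold `θ`. -/
def Bistable (f : ℝ → ℝ) (θ : ℝ) : Prop :=
  Continuous f ∧ θ ∈ Set.Ioo (0:ℝ) 1 ∧ f 0 = 0 ∧ f θ = 0 ∧ f 1 = 0 ∧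
  (∀ p ∈ Set.Ioo 0 θ, f p < 0) ∧ (∀ p ∈ Set.Ioo θ 1, f p > 0)

/-- `F(z) = ∫₀^z f`. -/
noncomputable def Fint (f : ℝ → ℝ) (z : ℝ) : ℝ := ∫ ξ in (0:ℝ)..z, f ξ

/-- A classical solution (with values in `[0,1]`) of the controlled reaction-diffusion
system `∂ₜu - σΔu = f(u) + (μ(1-u) - f(u))₊ 1_Ω` for `0 < t ≤ T`,
`∂ₜu - σΔu = f(u)` for `t > T`. -/
def IsControlledSolution (d : ℕ) (σ μ T : ℝ) (Ω : Set (EuclideanSpace ℝ (Fin d)))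
    (f : ℝ → ℝ) (u : ℝ → EuclideanSpace ℝ (Fin d) → ℝ) : Prop :=
  ContinuousOn (fun q : ℝ × EuclideanSpace ℝ (Fin d) => u q.1 q.2)
      (Set.Ici 0 ×ˢ Set.univ) ∧
  (∀ t ≥ (0:ℝ), ∀ x, u t x ∈ Set.Icc (0:ℝ) 1) ∧
  (∀ x, ∀ t > (0:ℝ), DifferentiableAt ℝ (fun s => u s x) t) ∧
  (∀ t > (0:ℝ), ContDiff ℝ 2 (u t)) ∧
  (∀ t, 0 < t → t ≤ T → ∀ x,
    deriv (fun s => u s x) t - σ * lap d (u t) x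
      = f (u t x) + max (μ * (1 - u t x) - f (u t x)) 0
          * Set.indicator Ω (fun _ => (1:ℝ)) x) ∧
  (∀ t > T, ∀ x, deriv (fun s => u s x) t - σ * lap d (u t) x = f (u t x))

/-- `u(t,·) → 1` locally uniformly as `t → +∞`. -/
def ConvergesLocUnifToOne (d : ℕ) (u : ℝ → EuclideanSpace ℝ (Fin d) → ℝ) : Prop :=
  ∀ K : Set (EuclideanSpace ℝ (Fin d)), IsCompact K →
    TendstoUniformlyOn (fun t x => u t x) (fun _ => 1) Filter.atTop K

/-!
Compare `w = u₂ - u₁` with zero. Since `max (f p) (μ (1 - p))` is Lipschitz in `p` and grows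
with `μ` (for `p ≤ 1`), and the control of `u₂` is active wherever that of `u₁` is, `w`
satisfies `∂ₜw - σΔw ≥ -(L + μ₂)|w|` and `w(0, ·) = 0`. The maximum principle on all of `ℝᵈ`
then gives `w ≥ 0`: for `ε > 0`, the function `w + ε e^{λt}(1 + |x|²)` with
`λ = L + μ₂ + 2σd + 1` is positive, since at a first zero it would have `∂ₜ ≤ 0` and `Δ ≥ 0`,
while the barrier makes `∂ₜ - σΔ` strictly positive there; the barrier also keeps
its nonpositivity set in a compact set, so a first zero exists. Letting `ε → 0` gives `w ≥ 0`.
-/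

section Calculus
variable {E : Type*} [NormedAddCommGroup E] [NormedSpace ℝ E]

theorem ContDiff.differentiable_fderiv_apply {g : E → ℝ} (hg : ContDiff ℝ 2 g) (e : E) :
    Differentiable ℝ (fun y => fderiv ℝ g y e) :=
  ((hg.fderiv_right (m := 1) (by norm_num)).clm_apply contDiff_const).differentiable
    (by norm_num)

theorem deriv_deriv_nonneg_of_isLocalMin {φ : ℝ → ℝ} {a : ℝ} (hc : ContinuousAt φ a)
    (hmin : IsLocalMin φ a) : 0 ≤ deriv (deriv φ) a := by
  by_contra! hneg
  have hmax := isLocalMax_of_deriv_deriv_neg hneg hmin.deriv_eq_zero hc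
  have hconst : φ =ᶠ[nhds a] fun _ => φ a := by
    filter_upwards [hmin, hmax] with s h₁ h₂ using le_antisymm h₂ h₁
  have hderiv : deriv φ =ᶠ[nhds a] fun _ => 0 := by
    simpa using hconst.deriv
  simp [hderiv.deriv_eq] at hneg

theorem fderiv_fderiv_apply_self_nonneg_of_isLocalMin {g : E → ℝ} (hg : ContDiff ℝ 2 g)
    {x : E} (hmin : IsLocalMin g x) (e : E) :
    0 ≤ fderiv ℝ (fun y => fderiv ℝ g y e) x e := by
  have hline : ∀ s : ℝ, HasDerivAt (fun s : ℝ => x + s • e) e s := fun s => by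
    simpa using ((hasDerivAt_id s).smul_const e).const_add x
  have hg1 : Differentiable ℝ g := hg.differentiable (by norm_num)
  have hfirst : deriv (fun s : ℝ => g (x + s • e)) = fun s => fderiv ℝ g (x + s • e) e :=
    funext fun s => ((hg1 _).hasFDerivAt.comp_hasDerivAt s (hline s)).deriv
  have hsecond : deriv (deriv fun s : ℝ => g (x + s • e)) 0
      = fderiv ℝ (fun y => fderiv ℝ g y e) x e := by
    have := ((hg.differentiable_fderiv_apply e (x + (0:ℝ) • e)).hasFDerivAt.comp_hasDerivAt 0
      (hline 0)).deriv
    simpa only [hfirst, zero_smul, add_zero, Function.comp_def] using this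
  have hcont : ContinuousAt (fun s : ℝ => x + s • e) 0 := by fun_prop
  rw [← hsecond]
  refine deriv_deriv_nonneg_of_isLocalMin (hg1.continuous.continuousAt.comp hcont) ?_
  exact IsLocalMin.comp_continuous (g := fun s : ℝ => x + s • e) (by simpa using hmin) hcont

theorem deriv_nonpos_of_isMinOn_Ioc {h : ℝ → ℝ} {a t : ℝ} (hat : a < t)
    (hmin : IsMinOn h (Ioc a t) t) : deriv h t ≤ 0 := by
  by_cases hd : DifferentiableAt ℝ h t
  · have hloc : IsLocalMinOn h (Iic t) t :=
      Filter.mem_of_superset (Ioc_mem_nhdsLE hat) fun s hs => hmin hs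
    have := hloc.hasFDerivWithinAt_nonneg hd.hasDerivAt.hasFDerivAt.hasFDerivWithinAt
      (y := -1) (mem_posTangentConeAt_of_segment_subset fun s hs => by
        rw [segment_symm, segment_eq_Icc (by linarith)] at hs
        exact hs.2)
    simpa using this
  · simp [deriv_zero_of_not_differentiableAt hd]

end Calculus

section Laplacian
variable {d : ℕ}

theorem lap_add {g h : EuclideanSpace ℝ (Fin d) → ℝ} (hg : ContDiff ℝ 2 g)
    (hh : ContDiff ℝ 2 h) (x : EuclideanSpace ℝ (Fin d)) :
    lap d (fun y => g y + h y) x = lap d g x + lap d h x := by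
  rw [lap, lap, lap, ← Finset.sum_add_distrib]
  refine Finset.sum_congr rfl fun i _ => ?_
  have hsum : (fun y => fderiv ℝ (fun z => g z + h z) y (EuclideanSpace.single i 1))
      = fun y => fderiv ℝ g y (EuclideanSpace.single i 1)
          + fderiv ℝ h y (EuclideanSpace.single i 1) := funext fun y => by
    rw [fderiv_fun_add (hg.differentiable (by norm_num) y) (hh.differentiable (by norm_num) y)]
    rfl
  rw [hsum, fderiv_fun_add (hg.differentiable_fderiv_apply _ x)
    (hh.differentiable_fderiv_apply _ x)]
  rfl

theorem lap_const_mul {g : EuclideanSpace ℝ (Fin d) → ℝ} (hg : ContDiff ℝ 2 g)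
    (c : ℝ) (x : EuclideanSpace ℝ (Fin d)) :
    lap d (fun y => c * g y) x = c * lap d g x := by
  rw [lap, lap, Finset.mul_sum]
  refine Finset.sum_congr rfl fun i _ => ?_
  have hmul : (fun y => fderiv ℝ (fun z => c * g z) y (EuclideanSpace.single i 1))
      = fun y => c * fderiv ℝ g y (EuclideanSpace.single i 1) := funext fun y => by
    rw [fderiv_const_mul (hg.differentiable (by norm_num) y)]
    rfl
  rw [hmul, fderiv_const_mul (hg.differentiable_fderiv_apply _ x)]
  rfl

theorem lap_sub {g h : EuclideanSpace ℝ (Fin d) → ℝ} (hg : ContDiff ℝ 2 g)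
    (hh : ContDiff ℝ 2 h) (x : EuclideanSpace ℝ (Fin d)) :
    lap d (fun y => g y - h y) x = lap d g x - lap d h x := by
  have hneg : (fun y => g y - h y) = fun y => g y + (-1) * h y := funext fun y => by ring
  rw [hneg, lap_add hg (contDiff_const.mul hh), lap_const_mul hh]
  ring

theorem contDiff_one_add_norm_sq :
    ContDiff ℝ 2 (fun y : EuclideanSpace ℝ (Fin d) => 1 + ‖y‖ ^ 2) :=
  contDiff_const.add (contDiff_norm_sq ℝ)

theorem lap_one_add_norm_sq (x : EuclideanSpace ℝ (Fin d)) :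
    lap d (fun y => 1 + ‖y‖ ^ 2) x = 2 * d := by
  have hfirst : ∀ (e : EuclideanSpace ℝ (Fin d)),
      (fun y => fderiv ℝ (fun z => 1 + ‖z‖ ^ 2) y e) = fun y => 2 * inner ℝ y e := by
    intro e; funext y
    rw [fderiv_const_add, ((hasStrictFDerivAt_norm_sq y).hasFDerivAt).fderiv]
    simp [innerSL_apply_apply]
  simp only [lap, hfirst]
  have hsecond : ∀ (e : EuclideanSpace ℝ (Fin d)),
      fderiv ℝ (fun y => 2 * inner ℝ y e) x e = 2 * ‖e‖ ^ 2 := by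
    intro e
    have hlin : HasFDerivAt (fun y => 2 * inner ℝ y e) ((2:ℝ) • innerSL ℝ e) x := by
      simpa [real_inner_comm] using ((innerSL ℝ e).hasFDerivAt (x := x)).const_mul (2:ℝ)
    simp [hlin.fderiv]
  simp [hsecond, mul_comm]

theorem lap_nonneg_of_isLocalMin {g : EuclideanSpace ℝ (Fin d) → ℝ} (hg : ContDiff ℝ 2 g)
    {x : EuclideanSpace ℝ (Fin d)} (hmin : IsLocalMin g x) : 0 ≤ lap d g x :=
  Finset.sum_nonneg fun _ _ => fderiv_fderiv_apply_self_nonneg_of_isLocalMin hg hmin _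

end Laplacian

noncomputable def heatOp (d : ℕ) (σ : ℝ) (u : ℝ → EuclideanSpace ℝ (Fin d) → ℝ) (t : ℝ)
    (x : EuclideanSpace ℝ (Fin d)) : ℝ :=
  deriv (fun s => u s x) t - σ * lap d (u t) x

section HeatOperator
variable {d : ℕ} {σ t : ℝ} {x : EuclideanSpace ℝ (Fin d)}

theorem heatOp_sub {u v : ℝ → EuclideanSpace ℝ (Fin d) → ℝ}
    (hut : DifferentiableAt ℝ (fun s => u s x) t) (hvt : DifferentiableAt ℝ (fun s => v s x) t)
    (hux : ContDiff ℝ 2 (u t)) (hvx : ContDiff ℝ 2 (v t)) :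
    heatOp d σ (fun t x => u t x - v t x) t x = heatOp d σ u t x - heatOp d σ v t x := by
  simp only [heatOp]
  rw [deriv_fun_sub hut hvt, lap_sub hux hvx]
  ring

theorem heatOp_add_barrier {w : ℝ → EuclideanSpace ℝ (Fin d) → ℝ}
    (hwt : DifferentiableAt ℝ (fun s => w s x) t) (hwx : ContDiff ℝ 2 (w t)) (ε l : ℝ) :
    heatOp d σ (fun t x => w t x + ε * Real.exp (l * t) * (1 + ‖x‖ ^ 2)) t x
      = heatOp d σ w t x + ε * Real.exp (l * t) * (l * (1 + ‖x‖ ^ 2) - 2 * σ * d) := by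
  have hexp : HasDerivAt (fun s => ε * Real.exp (l * s) * (1 + ‖x‖ ^ 2))
      (ε * (Real.exp (l * t) * l) * (1 + ‖x‖ ^ 2)) t := by
    have := ((hasDerivAt_id t).const_mul l).exp
    simpa using (this.const_mul ε).mul_const (1 + ‖x‖ ^ 2)
  simp only [heatOp]
  rw [deriv_fun_add hwt hexp.differentiableAt, hexp.deriv,
    lap_add hwx (contDiff_const.mul contDiff_one_add_norm_sq),
    lap_const_mul contDiff_one_add_norm_sq, lap_one_add_norm_sq]
  ring

theorem heatOp_nonpos_of_isMinOn {v : ℝ → EuclideanSpace ℝ (Fin d) → ℝ} (hσ : 0 ≤ σ)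
    (ht : 0 < t) (hvx : ContDiff ℝ 2 (v t)) (htime : IsMinOn (fun s => v s x) (Ioc 0 t) t)
    (hspace : IsLocalMin (v t) x) : heatOp d σ v t x ≤ 0 := by
  have := mul_nonneg hσ (lap_nonneg_of_isLocalMin hvx hspace)
  have := deriv_nonpos_of_isMinOn_Ioc ht htime
  rw [heatOp]
  linarith

end HeatOperator

theorem exists_first_zero_of_continuousOn {X : Type*} [TopologicalSpace X] [T2Space X]
    {v : ℝ → X → ℝ} (hv : ContinuousOn (fun q : ℝ × X => v q.1 q.2) (Ici 0 ×ˢ univ))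
    (hv0 : ∀ x, 0 < v 0 x) {K : Set X} (hK : IsCompact K)
    (hvK : ∀ t ≥ 0, ∀ x, v t x ≤ 0 → x ∈ K) {t₀ : ℝ} (ht₀ : 0 ≤ t₀) {x₀ : X}
    (hx₀ : v t₀ x₀ ≤ 0) :
    ∃ t > 0, ∃ x, v t x = 0 ∧ (∀ y, 0 ≤ v t y) ∧ ∀ s ∈ Ico 0 t, 0 < v s x := by
  set S := (Icc 0 t₀ ×ˢ K) ∩ (fun q : ℝ × X => v q.1 q.2) ⁻¹' Iic 0
  have hS : IsCompact S := (isCompact_Icc.prod hK).of_isClosed_subset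
    ((hv.mono fun q hq => ⟨hq.1.1, mem_univ _⟩).preimage_isClosed_of_isClosed
      (isClosed_Icc.prod hK.isClosed) isClosed_Iic) inter_subset_left
  have hmemS : ∀ t ∈ Icc 0 t₀, ∀ x, v t x ≤ 0 → (t, x) ∈ S :=
    fun t ht x hx => ⟨⟨ht, hvK t ht.1 x hx⟩, hx⟩
  obtain ⟨⟨t, x⟩, ⟨⟨⟨ht0, htt₀⟩, -⟩, hvx⟩, hmin⟩ :=
    hS.exists_isMinOn ⟨_, hmemS t₀ ⟨ht₀, le_rfl⟩ x₀ hx₀⟩ continuous_fst.continuousOn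
  have hbefore : ∀ s ∈ Ico 0 t, ∀ y, 0 < v s y := fun s hs y => by
    by_contra! hle
    exact hs.2.not_ge (hmin (hmemS s ⟨hs.1, hs.2.le.trans htt₀⟩ y hle))
  have htpos : 0 < t := ht0.lt_of_ne fun h => (hv0 x).not_ge (h ▸ hvx)
  have hafter : ∀ y, 0 ≤ v t y := fun y => by
    have hcont : ContinuousWithinAt (fun s => v s y) (Ico 0 t) t :=
      ((hv.comp (continuous_id.prodMk continuous_const).continuousOn
        fun s hs => ⟨hs, mem_univ _⟩) t ht0).mono fun s hs => hs.1
    have : (nhdsWithin t (Ico 0 t)).NeBot := by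
      rw [← mem_closure_iff_nhdsWithin_neBot, closure_Ico htpos.ne]
      exact ⟨ht0, le_rfl⟩
    exact ge_of_tendsto hcont <| eventually_nhdsWithin_of_forall fun s hs => (hbefore s hs y).le
  exact ⟨t, htpos, x, le_antisymm hvx (hafter x), hafter, fun s hs => hbefore s hs x⟩

theorem norm_le_div_of_add_mul_one_add_sq_nonpos {E : Type*} [SeminormedAddCommGroup E]
    {x : E} {a ε M s : ℝ} (hε : 0 < ε) (hs : 1 ≤ s) (ha : -M ≤ a)
    (h : a + ε * s * (1 + ‖x‖ ^ 2) ≤ 0) : ‖x‖ ≤ M / ε := by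
  have hgrow : ε * (1 + ‖x‖ ^ 2) ≤ ε * s * (1 + ‖x‖ ^ 2) := by
    nlinarith [mul_le_mul_of_nonneg_left hs hε.le, sq_nonneg ‖x‖]
  rw [le_div_iff₀ hε]
  nlinarith [sq_nonneg (‖x‖ - 1)]

section MaximumPrinciple
variable {d : ℕ} {σ K : ℝ} {w : ℝ → EuclideanSpace ℝ (Fin d) → ℝ}

theorem pos_add_barrier_of_heatOp_ge (hσ : 0 ≤ σ) (hK : 0 ≤ K)
    (hcont : ContinuousOn (fun q : ℝ × EuclideanSpace ℝ (Fin d) => w q.1 q.2) (Ici 0 ×ˢ univ))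
    {M : ℝ} (hbdd : ∀ t ≥ 0, ∀ x, -M ≤ w t x)
    (hdt : ∀ x, ∀ t > 0, DifferentiableAt ℝ (fun s => w s x) t)
    (hdx : ∀ t > 0, ContDiff ℝ 2 (w t))
    (hheat : ∀ t > 0, ∀ x, -(K * |w t x|) ≤ heatOp d σ w t x)
    (h0 : ∀ x, 0 ≤ w 0 x) {ε : ℝ} (hε : 0 < ε) :
    ∀ t ≥ 0, ∀ x,
      0 < w t x + ε * Real.exp ((K + 2 * σ * d + 1) * t) * (1 + ‖x‖ ^ 2) := by
  set l := K + 2 * σ * d + 1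
  set v := fun t (x : EuclideanSpace ℝ (Fin d)) =>
    w t x + ε * Real.exp (l * t) * (1 + ‖x‖ ^ 2)
  by_contra! hneg
  obtain ⟨t₀, ht₀, x₀, hx₀⟩ := hneg
  have hv0 : ∀ x, 0 < v 0 x := fun x => by
    have := h0 x
    simp only [v, mul_zero, Real.exp_zero, mul_one]
    positivity
  have hvcont : ContinuousOn (fun q : ℝ × EuclideanSpace ℝ (Fin d) => v q.1 q.2)
      (Ici 0 ×ˢ univ) :=
    hcont.add (Continuous.continuousOn (by fun_prop))
  have hvK : ∀ t ≥ 0, ∀ x, v t x ≤ 0 → x ∈ Metric.closedBall 0 (M / ε) :=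
    fun t ht x hvx => mem_closedBall_zero_iff.mpr <| norm_le_div_of_add_mul_one_add_sq_nonpos hε
      (Real.one_le_exp (by positivity)) (hbdd t ht x) hvx
  obtain ⟨t, ht, x, hzero, hnonneg, hbefore⟩ :=
    exists_first_zero_of_continuousOn hvcont hv0 (isCompact_closedBall _ _) hvK ht₀ hx₀
  have hheatv : heatOp d σ v t x ≤ 0 :=
    heatOp_nonpos_of_isMinOn hσ ht ((hdx t ht).add (contDiff_const.mul contDiff_one_add_norm_sq))
      (fun s hs => show v t x ≤ v s x by
        rcases hs.2.lt_or_eq with hlt | rfl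
        · exact hzero ▸ (hbefore s ⟨hs.1.le, hlt⟩).le
        · exact le_rfl)
      (Filter.Eventually.of_forall fun y => show v t x ≤ v t y from hzero ▸ hnonneg y)
  set c := ε * Real.exp (l * t)
  have hc : 0 < c := by positivity
  have hwx : w t x = -(c * (1 + ‖x‖ ^ 2)) := by simp only [v] at hzero; linarith
  have key := hheat t ht x
  rw [hwx, abs_neg, abs_of_pos (by positivity)] at key
  rw [heatOp_add_barrier (hdt x t ht) (hdx t ht)] at hheatv
  have hgap : c * (l * (1 + ‖x‖ ^ 2) - 2 * σ * d) - K * (c * (1 + ‖x‖ ^ 2))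
      = 2 * σ * d * c * ‖x‖ ^ 2 + c * (1 + ‖x‖ ^ 2) := by
    simp only [l]; ring
  have : 0 < 2 * σ * d * c * ‖x‖ ^ 2 + c * (1 + ‖x‖ ^ 2) := by positivity
  linarith

theorem nonneg_of_heatOp_ge (hσ : 0 ≤ σ) (hK : 0 ≤ K)
    (hcont : ContinuousOn (fun q : ℝ × EuclideanSpace ℝ (Fin d) => w q.1 q.2) (Ici 0 ×ˢ univ))
    {M : ℝ} (hbdd : ∀ t ≥ 0, ∀ x, -M ≤ w t x)
    (hdt : ∀ x, ∀ t > 0, DifferentiableAt ℝ (fun s => w s x) t)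
    (hdx : ∀ t > 0, ContDiff ℝ 2 (w t))
    (hheat : ∀ t > 0, ∀ x, -(K * |w t x|) ≤ heatOp d σ w t x)
    (h0 : ∀ x, 0 ≤ w 0 x) :
    ∀ t ≥ 0, ∀ x, 0 ≤ w t x := by
  intro t ht x
  set C := Real.exp ((K + 2 * σ * d + 1) * t) * (1 + ‖x‖ ^ 2)
  have hC : 0 < C := by positivity
  refine le_of_forall_pos_lt_add fun δ hδ => ?_
  have := pos_add_barrier_of_heatOp_ge hσ hK hcont hbdd hdt hdx hheat h0 (div_pos hδ hC) t ht x
  rwa [mul_assoc, div_mul_cancel₀ _ hC.ne'] at this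

end MaximumPrinciple

theorem neg_mul_abs_le_max_sub_max {f : ℝ → ℝ} {L : NNReal} (hlip : LipschitzWith L f)
    {μ₁ μ₂ : ℝ} (hμ₁ : 0 ≤ μ₁) (hμ : μ₁ ≤ μ₂) {a b : ℝ} (hb : b ≤ 1) :
    -((L + μ₂) * |b - a|) ≤ max (f b) (μ₂ * (1 - b)) - max (f a) (μ₁ * (1 - a)) := by
  have hf : |f b - f a| ≤ L * |b - a| := by
    simpa only [Real.dist_eq] using hlip.dist_le_mul b a
  have hlin : |μ₁ * (1 - b) - μ₁ * (1 - a)| ≤ μ₂ * |b - a| := by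
    rw [← mul_sub, abs_mul, abs_of_nonneg hμ₁, sub_sub_sub_cancel_left, abs_sub_comm]
    exact mul_le_mul_of_nonneg_right hμ (abs_nonneg _)
  have hmono : max (f b) (μ₁ * (1 - b)) ≤ max (f b) (μ₂ * (1 - b)) :=
    max_le_max le_rfl (mul_le_mul_of_nonneg_right hμ (by linarith))
  have hmax := abs_max_sub_max_le_max (f b) (μ₁ * (1 - b)) (f a) (μ₁ * (1 - a))
  have hL : 0 ≤ (L : ℝ) * |b - a| := by positivity
  have hμ₂ : 0 ≤ μ₂ * |b - a| := mul_nonneg (hμ₁.trans hμ) (abs_nonneg _)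
  have := neg_abs_le (max (f b) (μ₁ * (1 - b)) - max (f a) (μ₁ * (1 - a)))
  have := max_le (hf.trans (le_add_of_nonneg_right hμ₂)) (hlin.trans (le_add_of_nonneg_left hL))
  linarith

namespace IsControlledSolution
variable {d : ℕ} {σ μ T t : ℝ} {Ω : Set (EuclideanSpace ℝ (Fin d))} {f : ℝ → ℝ}
  {u : ℝ → EuclideanSpace ℝ (Fin d) → ℝ} {x : EuclideanSpace ℝ (Fin d)}

theorem heatOp_eq_of_mem (hu : IsControlledSolution d σ μ T Ω f u) (ht : 0 < t) (htT : t ≤ T)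
    (hx : x ∈ Ω) : heatOp d σ u t x = max (f (u t x)) (μ * (1 - u t x)) := by
  rw [heatOp, hu.2.2.2.2.1 t ht htT x, indicator_of_mem hx, mul_one, ← max_add_add_left,
    add_sub_cancel, add_zero, max_comm]

theorem heatOp_eq_of_not_mem (hu : IsControlledSolution d σ μ T Ω f u) (ht : 0 < t)
    (hx : ¬(t ≤ T ∧ x ∈ Ω)) : heatOp d σ u t x = f (u t x) := by
  rcases le_or_gt t T with htT | hTt
  · rw [heatOp, hu.2.2.2.2.1 t ht htT x, indicator_of_notMem fun h => hx ⟨htT, h⟩, mul_zero,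
      add_zero]
  · exact hu.2.2.2.2.2 t hTt x

theorem le_heatOp (hu : IsControlledSolution d σ μ T Ω f u) (ht : 0 < t) :
    f (u t x) ≤ heatOp d σ u t x := by
  by_cases hx : t ≤ T ∧ x ∈ Ω
  · exact (hu.heatOp_eq_of_mem ht hx.1 hx.2).symm ▸ le_max_left _ _
  · exact (hu.heatOp_eq_of_not_mem ht hx).ge

theorem neg_mul_abs_le_heatOp_sub {L : NNReal} (hlip : LipschitzWith L f) {μ₁ μ₂ T₁ T₂ : ℝ}
    (hμ₁ : 0 ≤ μ₁) (hμ : μ₁ ≤ μ₂) (hT : T₁ ≤ T₂) {Ω₁ Ω₂ : Set (EuclideanSpace ℝ (Fin d))}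
    (hΩ : Ω₁ ⊆ Ω₂) {u₁ u₂ : ℝ → EuclideanSpace ℝ (Fin d) → ℝ}
    (hu₁ : IsControlledSolution d σ μ₁ T₁ Ω₁ f u₁) (hu₂ : IsControlledSolution d σ μ₂ T₂ Ω₂ f u₂)
    (ht : 0 < t) :
    -((L + μ₂) * |u₂ t x - u₁ t x|) ≤ heatOp d σ u₂ t x - heatOp d σ u₁ t x := by
  by_cases hx : t ≤ T₁ ∧ x ∈ Ω₁
  · rw [hu₁.heatOp_eq_of_mem ht hx.1 hx.2, hu₂.heatOp_eq_of_mem ht (hx.1.trans hT) (hΩ hx.2)]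
    exact neg_mul_abs_le_max_sub_max hlip hμ₁ hμ (hu₂.2.1 t ht.le x).2
  · have hf : |f (u₂ t x) - f (u₁ t x)| ≤ L * |u₂ t x - u₁ t x| := by
      simpa only [Real.dist_eq] using hlip.dist_le_mul (u₂ t x) (u₁ t x)
    have hμ₂ : 0 ≤ μ₂ * |u₂ t x - u₁ t x| := mul_nonneg (hμ₁.trans hμ) (abs_nonneg _)
    rw [hu₁.heatOp_eq_of_not_mem ht hx]
    linarith [hu₂.le_heatOp (x := x) ht, neg_abs_le (f (u₂ t x) - f (u₁ t x))]

end IsControlledSolution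

theorem monotone_in_parameters_general
    (d : ℕ) (σ : ℝ) (hσ : 0 < σ)
    (f : ℝ → ℝ) (L : NNReal) (hlip : LipschitzWith L f)
    (μ₁ μ₂ T₁ T₂ : ℝ) (hμ₁ : 0 < μ₁) (hμ : μ₁ ≤ μ₂) (hT : T₁ ≤ T₂)
    (Ω₁ Ω₂ : Set (EuclideanSpace ℝ (Fin d)))
    (hΩ : Ω₁ ⊆ Ω₂)
    (u₁ u₂ : ℝ → EuclideanSpace ℝ (Fin d) → ℝ)
    (hu₁ : IsControlledSolution d σ μ₁ T₁ Ω₁ f u₁)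
    (hu₂ : IsControlledSolution d σ μ₂ T₂ Ω₂ f u₂)
    (h0 : ∀ x, u₁ 0 x = u₂ 0 x) :
    ∀ t ≥ (0:ℝ), ∀ x, u₁ t x ≤ u₂ t x := by
  have hgap := fun t (ht : 0 < t) x =>
    hu₁.neg_mul_abs_le_heatOp_sub hlip hμ₁.le hμ hT hΩ hu₂ ht (x := x)
  obtain ⟨hc₁, hrange₁, hdt₁, hdx₁, -⟩ := hu₁
  obtain ⟨hc₂, hrange₂, hdt₂, hdx₂, -⟩ := hu₂
  have hw := nonneg_of_heatOp_ge (w := fun t x => u₂ t x - u₁ t x) (M := 1) hσ.le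
    (add_nonneg L.coe_nonneg (hμ₁.le.trans hμ)) (hc₂.sub hc₁)
    (fun t ht x => by linarith [(hrange₂ t ht x).1, (hrange₁ t ht x).2])
    (fun x t ht => (hdt₂ x t ht).sub (hdt₁ x t ht)) (fun t ht => (hdx₂ t ht).sub (hdx₁ t ht))
    (fun t ht x => by
      rw [heatOp_sub (hdt₂ x t ht) (hdt₁ x t ht) (hdx₂ t ht) (hdx₁ t ht)]
      exact hgap t ht x)
    (fun x => by simp [h0 x])
  exact fun t ht x => sub_nonneg.mp (hw t ht x)

/-- Monotonicity of solutions of the controlled system with respect to the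
feedback gain `μ`, the control time `T`, and the control domain `Ω`. -/
theorem monotone_in_parameters
    (d : ℕ) (hd : 1 ≤ d) (σ : ℝ) (hσ : 0 < σ)
    (f : ℝ → ℝ) (L : NNReal) (hlip : LipschitzWith L f) (θ : ℝ) (hbi : Bistable f θ)
    (μ₁ μ₂ T₁ T₂ : ℝ) (hμ₁ : 0 < μ₁) (hμ : μ₁ ≤ μ₂) (hT₁ : 0 < T₁) (hT : T₁ ≤ T₂)
    (Ω₁ Ω₂ : Set (EuclideanSpace ℝ (Fin d))) (hΩ₁ : IsOpen Ω₁) (hΩ₂ : IsOpen Ω₂)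
    (hΩ : Ω₁ ⊆ Ω₂)
    (u₁ u₂ : ℝ → EuclideanSpace ℝ (Fin d) → ℝ)
    (hu₁ : IsControlledSolution d σ μ₁ T₁ Ω₁ f u₁)
    (hu₂ : IsControlledSolution d σ μ₂ T₂ Ω₂ f u₂)
    (h0 : ∀ x, u₁ 0 x = u₂ 0 x) :
    ∀ t ≥ (0:ℝ), ∀ x, u₁ t x ≤ u₂ t x :=
  monotone_in_parameters_general d σ hσ f L hlip μ₁ μ₂ T₁ T₂ hμ₁ hμ hT Ω₁ Ω₂ hΩ u₁ u₂ hu₁ hu₂ h0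
end

section
/- Let d₀ > 0, δ > 1, s_f ∈ [0,1), s_h ∈ (0,1], and assume s_f + δ − 1 < δ·s_h. Set θ := (s_f + δ − 1)/(δ·s_h). Then: (i) θ ∈ (0,1); (ii) the denominator s_h·p² − (s_f + s_h)·p + 1 is strictly positive for every p ∈ [0,1]; (iii) the function f(p) := δ·d₀·s_h·p(1−p)(p−θ)/(s_h·p² − (s_f+s_h)·p + 1) is bistable with threshold θ, i.e. f(0) = f(θ) = f(1) = 0, f(p) < 0 for all p ∈ (0,θ), and f(p) > 0 for all p ∈ (θ,1). -/
open Set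

/-! Since `δ > 1` and `s_f ≥ 0`, the threshold is a ratio of two positive numbers with the
numerator the smaller one. The denominator equals `(1 - p)² + (1 - s_f) p + (1 - s_h) p (1 - p)`,
a sum of nonnegative terms that is positive on `[0,1]`. Then `f` is a positive multiple of
`p (1 - p) (p - θ)` divided by a positive number, and the sign of the cubic is read off its
factors. -/

def IsBistable (f : ℝ → ℝ) (θ : ℝ) : Prop :=
  θ ∈ Ioo 0 1 ∧ f 0 = 0 ∧ f θ = 0 ∧ f 1 = 0 ∧
    (∀ p ∈ Ioo 0 θ, f p < 0) ∧ ∀ p ∈ Ioo θ 1, 0 < f p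

lemma div_mem_Ioo_zero_one {a b : ℝ} (ha : 0 < a) (hab : a < b) : a / b ∈ Ioo 0 1 :=
  ⟨div_pos ha (ha.trans hab), (div_lt_one (ha.trans hab)).2 hab⟩

lemma quadratic_denominator_pos {sf sh p : ℝ} (hsf : sf < 1) (hsh : sh ≤ 1)
    (hp : p ∈ Icc (0 : ℝ) 1) : 0 < sh * p ^ 2 - (sf + sh) * p + 1 := by
  obtain ⟨hp0, hp1⟩ := hp
  have hsplit : sh * p ^ 2 - (sf + sh) * p + 1
      = (1 - p) ^ 2 + (1 - sf) * p + (1 - sh) * (p * (1 - p)) := by ring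
  have hcorr : 0 ≤ (1 - sh) * (p * (1 - p)) :=
    mul_nonneg (by linarith) (mul_nonneg hp0 (by linarith))
  rcases hp0.eq_or_lt with rfl | hp_pos
  · norm_num
  · have : 0 < (1 - sf) * p := mul_pos (by linarith) hp_pos
    nlinarith [sq_nonneg (1 - p)]

lemma isBistable_of_eq_cubic_div {f g : ℝ → ℝ} {c θ : ℝ} (hc : 0 < c) (hθ : θ ∈ Ioo 0 1)
    (hg : ∀ p ∈ Icc (0 : ℝ) 1, 0 < g p) (hf : ∀ p, f p = c * (p * (1 - p) * (p - θ)) / g p) :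
    IsBistable f θ := by
  obtain ⟨hθ0, hθ1⟩ := hθ
  refine ⟨⟨hθ0, hθ1⟩, by simp [hf], by simp [hf], by simp [hf], ?_, ?_⟩
  · rintro p ⟨hp0, hpθ⟩
    have hcubic : p * (1 - p) * (p - θ) < 0 :=
      mul_neg_of_pos_of_neg (mul_pos hp0 (by linarith)) (by linarith)
    rw [hf]
    exact div_neg_of_neg_of_pos (mul_neg_of_pos_of_neg hc hcubic)
      (hg p ⟨hp0.le, by linarith⟩)
  · rintro p ⟨hθp, hp1⟩
    have hcubic : 0 < p * (1 - p) * (p - θ) :=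
      mul_pos (mul_pos (by linarith) (by linarith)) (by linarith)
    rw [hf]
    exact div_pos (mul_pos hc hcubic) (hg p ⟨by linarith, hp1.le⟩)

/-- The Wolbachia reaction term `f` is bistable with threshold `θ = (s_f + δ - 1)/(δ s_h)`:
(i) `θ ∈ (0,1)`; (ii) the denominator is positive on `[0,1]`; (iii) `f` vanishes at
`0, θ, 1`, is negative on `(0,θ)` and positive on `(θ,1)`. -/
theorem wolbachia_bistable
    (d₀ δ sf sh : ℝ) (hd₀ : 0 < d₀) (hδ : 1 < δ)
    (hsf : sf ∈ Set.Ico (0:ℝ) 1) (hsh : sh ∈ Set.Ioc (0:ℝ) 1)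
    (hcomp : sf + δ - 1 < δ * sh)
    (θ : ℝ) (hθ : θ = (sf + δ - 1) / (δ * sh))
    (f : ℝ → ℝ)
    (hf : ∀ p : ℝ, f p =
      δ * d₀ * sh * (p * (1 - p) * (p - θ)) / (sh * p ^ 2 - (sf + sh) * p + 1)) :
    θ ∈ Set.Ioo (0:ℝ) 1 ∧
    (∀ p ∈ Set.Icc (0:ℝ) 1, 0 < sh * p ^ 2 - (sf + sh) * p + 1) ∧
    f 0 = 0 ∧ f θ = 0 ∧ f 1 = 0 ∧
    (∀ p ∈ Set.Ioo 0 θ, f p < 0) ∧ (∀ p ∈ Set.Ioo θ 1, f p > 0) := by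
  obtain ⟨hsf0, hsf1⟩ := hsf
  obtain ⟨hsh0, hsh1⟩ := hsh
  have hθ_mem : θ ∈ Ioo 0 1 := hθ ▸ div_mem_Ioo_zero_one (by linarith) hcomp
  have hden : ∀ p ∈ Icc (0 : ℝ) 1, 0 < sh * p ^ 2 - (sf + sh) * p + 1 :=
    fun p hp ↦ quadratic_denominator_pos hsf1 hsh1 hp
  have hc : 0 < δ * d₀ * sh := by positivity
  obtain ⟨-, h0, hθ0, h1, hneg, hpos⟩ := isBistable_of_eq_cubic_div hc hθ_mem hden hf
  exact ⟨hθ_mem, hden, h0, hθ0, h1, hneg, hpos⟩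
end

section
/- (Traveling wave speed identity.) Let f : ℝ → ℝ be continuous, σ > 0, c ∈ ℝ, and let p̃ : ℝ → [0,1] be a C² function satisfying σ·p̃''(z) + c·p̃'(z) + f(p̃(z)) = 0 for all z ∈ ℝ, with p̃(z) → 1 as z → −∞, p̃(z) → 0 as z → +∞, and p̃'(z) → 0 as z → ±∞. Assume moreover that (p̃')² is integrable on ℝ. Then c·∫_ℝ (p̃'(z))² dz = ∫₀¹ f(z) dz. In particular ∫_ℝ (p̃')² dz > 0, so c > 0 if and only if ∫₀¹ f(z) dz > 0 (and c = 0 if and only if ∫₀¹ f(z) dz = 0). -/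
open Set MeasureTheory Filter Topology

/-! Multiplying the equation by `p̃'` shows that the energy `σ/2 · (p̃')² + F(p̃)`, with `F` a
primitive of `f`, has derivative `-c (p̃')²`. Integrating over `ℝ` and using the limits of `p̃`
and `p̃'` at `±∞` gives `c ∫ (p̃')² = F(1) - F(0)`. The integral is positive because `p̃` is not
constant, so `c` has the sign of `∫₀¹ f`. -/

theorem hasDerivAt_travelingWave_energy {f F p : ℝ → ℝ} {σ c z : ℝ}
    (hF : HasDerivAt F (f (p z)) (p z)) (hp : DifferentiableAt ℝ p z)
    (hp' : DifferentiableAt ℝ (deriv p) z)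
    (hode : σ * deriv (deriv p) z + c * deriv p z + f (p z) = 0) :
    HasDerivAt (fun z => σ / 2 * deriv p z ^ 2 + F (p z)) (-c * deriv p z ^ 2) z := by
  refine ((hp'.hasDerivAt.pow 2).const_mul (σ / 2) |>.add (hF.comp z hp.hasDerivAt)).congr_deriv ?_
  linear_combination deriv p z * hode

theorem mul_integral_sq_deriv_eq_integral_of_travelingWave {f p : ℝ → ℝ} {σ c a b : ℝ}
    (hf : Continuous f) (hp : ContDiff ℝ 2 p)
    (hode : ∀ z, σ * deriv (deriv p) z + c * deriv p z + f (p z) = 0)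
    (hbot : Tendsto p atBot (𝓝 a)) (htop : Tendsto p atTop (𝓝 b))
    (hbot' : Tendsto (deriv p) atBot (𝓝 0)) (htop' : Tendsto (deriv p) atTop (𝓝 0))
    (hint : Integrable fun z => deriv p z ^ 2) :
    c * ∫ z, deriv p z ^ 2 = ∫ z in b..a, f z := by
  set F : ℝ → ℝ := fun x => ∫ t in b..x, f t
  have hF : ∀ x, HasDerivAt F (f x) x := fun x => hf.integral_hasStrictDerivAt b x |>.hasDerivAt
  have hF_cont : Continuous F := continuous_iff_continuousAt.2 fun x => (hF x).continuousAt
  have energy_limit : ∀ {l : Filter ℝ} {q : ℝ}, Tendsto p l (𝓝 q) → Tendsto (deriv p) l (𝓝 0) →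
      Tendsto (fun z => σ / 2 * deriv p z ^ 2 + F (p z)) l (𝓝 (F q)) := fun hq hq' => by
    simpa using ((hq'.pow 2).const_mul (σ / 2)).add ((hF_cont.tendsto _).comp hq)
  have h := integral_of_hasDerivAt_of_tendsto
    (fun z => hasDerivAt_travelingWave_energy (hF (p z)) (hp.differentiable two_ne_zero z)
      (hp.differentiable_deriv_two z) (hode z))
    (hint.const_mul (-c)) (energy_limit hbot hbot') (energy_limit htop htop')
  simp only [F, intervalIntegral.integral_same, integral_const_mul] at h
  linarith

theorem integral_sq_deriv_pos_of_tendsto_ne {p : ℝ → ℝ} {a b : ℝ} (hp : Differentiable ℝ p)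
    (hp' : Continuous (deriv p)) (hint : Integrable fun z => deriv p z ^ 2)
    (hbot : Tendsto p atBot (𝓝 a)) (htop : Tendsto p atTop (𝓝 b)) (hab : a ≠ b) :
    0 < ∫ z, deriv p z ^ 2 := by
  refine (integral_nonneg fun z => sq_nonneg _).lt_of_ne fun h => hab ?_
  have hsq : (fun z => deriv p z ^ 2) = fun _ => 0 :=
    ((hp'.pow 2).ae_eq_iff_eq volume continuous_const).1
      ((integral_eq_zero_iff_of_nonneg (fun z => sq_nonneg _) hint).1 h.symm)
  have hconst : p = fun _ => p 0 := funext fun z =>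
    is_const_of_deriv_eq_zero hp (fun z => pow_eq_zero_iff two_ne_zero |>.1 (congrFun hsq z)) z 0
  rw [hconst, tendsto_const_nhds_iff] at hbot htop
  exact hbot.symm.trans htop

theorem traveling_wave_speed_general
    (f : ℝ → ℝ) (hf : Continuous f) (σ c : ℝ)
    (p : ℝ → ℝ) (hp : ContDiff ℝ 2 p)
    (hode : ∀ z, σ * deriv (deriv p) z + c * deriv p z + f (p z) = 0)
    (hbot : Tendsto p atBot (nhds 1)) (htop : Tendsto p atTop (nhds 0))
    (hbot' : Tendsto (deriv p) atBot (nhds 0)) (htop' : Tendsto (deriv p) atTop (nhds 0))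
    (hint : Integrable (fun z => (deriv p z) ^ 2)) :
    c * ∫ z : ℝ, (deriv p z) ^ 2 = ∫ z in (0:ℝ)..1, f z ∧
    (0 : ℝ) < ∫ z : ℝ, (deriv p z) ^ 2 ∧
    (0 < c ↔ 0 < ∫ z in (0:ℝ)..1, f z) ∧
    (c = 0 ↔ (∫ z in (0:ℝ)..1, f z) = 0) := by
  have hspeed := mul_integral_sq_deriv_eq_integral_of_travelingWave hf hp hode hbot htop hbot'
    htop' hint
  have hpos := integral_sq_deriv_pos_of_tendsto_ne (hp.differentiable two_ne_zero)
    (hp.continuous_deriv one_le_two) hint hbot htop one_ne_zero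
  rw [← hspeed]
  exact ⟨rfl, hpos, (mul_pos_iff_of_pos_right hpos).symm, (mul_eq_zero_iff_right hpos.ne').symm⟩

/-- Traveling wave speed identity: if `p̃` is a C² traveling-wave profile of
`σ p̃'' + c p̃' + f(p̃) = 0` connecting `1` (at `-∞`) to `0` (at `+∞`) with vanishing
derivative at infinity and `(p̃')²` integrable, then
`c ∫_ℝ (p̃')² = ∫₀¹ f`; in particular `∫_ℝ (p̃')² > 0`, so the sign of `c` is
that of `∫₀¹ f`. -/
theorem traveling_wave_speed
    (f : ℝ → ℝ) (hf : Continuous f) (σ c : ℝ) (hσ : 0 < σ)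
    (p : ℝ → ℝ) (hp : ContDiff ℝ 2 p) (hrange : ∀ z, p z ∈ Set.Icc (0:ℝ) 1)
    (hode : ∀ z, σ * deriv (deriv p) z + c * deriv p z + f (p z) = 0)
    (hbot : Tendsto p atBot (nhds 1)) (htop : Tendsto p atTop (nhds 0))
    (hbot' : Tendsto (deriv p) atBot (nhds 0)) (htop' : Tendsto (deriv p) atTop (nhds 0))
    (hint : Integrable (fun z => (deriv p z) ^ 2)) :
    c * ∫ z : ℝ, (deriv p z) ^ 2 = ∫ z in (0:ℝ)..1, f z ∧
    (0 : ℝ) < ∫ z : ℝ, (deriv p z) ^ 2 ∧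
    (0 < c ↔ 0 < ∫ z in (0:ℝ)..1, f z) ∧
    (c = 0 ↔ (∫ z in (0:ℝ)..1, f z) = 0) :=
  traveling_wave_speed_general f hf σ c p hp hode hbot htop hbot' htop' hint
end
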